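/- arXiv:1710.01932 — 3 statements merged into one kernel-verified Lean document; each statement's English description precedes it below -/
import Mathlib

section
/- There exists a sequence B of natural numbers such that the set Δ(B) − Δ(B) does not contain any IP-set (set of all finite sums of a sequence of nonzero integers). In particular, one may take B = (b_n) with b_n > 4·(b_1 + ⋯ + b_{n−1}). -/
/-!
Take `b n = 13 ^ n`. The element `(13^i - 13^j) - (13^k - 13^l)` of `Δ - Δ` has base-13 digit
vector `e_i - e_j - e_k + e_l`: digits in `[-2, 2]`, at most four of them nonzero. Base-13
expansions with digits in `[-6, 6]` are unique, so if all finite sums of `(a_n)` lay in `Δ - Δ`,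
the digit vector of a sum of at most five `a_n` would be the sum of their digit vectors. Bounded
digits of triple sums then force each position to be used by only finitely many `a_n`, hence five
of them have disjoint supports, and their sum has at least five nonzero digits.
-/

/-- The difference set `Δ(B) = {b_i - b_j : i > j}` of a sequence. -/
def deltaSet (b : ℕ → ℕ) : Set ℤ := {d | ∃ i j : ℕ, j < i ∧ d = (b i : ℤ) - (b j : ℤ)}

/-- `Δ(B) - Δ(B) = {a - c : a, c ∈ Δ(B)}`. -/
def deltaSubDelta (b : ℕ → ℕ) : Set ℤ :=
  {d | ∃ a ∈ deltaSet b, ∃ c ∈ deltaSet b, d = a - c}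

open Finset Finsupp

theorem Finsupp.support_sum_eq_biUnion_of_pairwiseDisjoint {ι α M : Type*} [DecidableEq α]
    [AddCommMonoid M] {g : ι → α →₀ M} {s : Finset ι}
    (h : (s : Set ι).PairwiseDisjoint fun i => (g i).support) :
    (∑ i ∈ s, g i).support = s.biUnion fun i => (g i).support := by
  classical
  induction s using Finset.induction_on with
  | empty => simp
  | insert i s hi ih =>
    rw [coe_insert, Set.pairwiseDisjoint_insert_of_notMem (mod_cast hi)] at h
    have hdisj : Disjoint (g i).support (∑ j ∈ s, g j).support := by
      rw [ih h.1]
      exact (disjoint_biUnion_right _ _ _).2 h.2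
    rw [sum_insert hi, biUnion_insert, support_add_eq hdisj, ih h.1]

theorem exists_card_eq_pairwiseDisjoint {ι α : Type*} [Infinite ι] {f : ι → Finset α}
    (hf : ∀ a, {i | a ∈ f i}.Finite) (m : ℕ) :
    ∃ K : Finset ι, K.card = m ∧ (K : Set ι).PairwiseDisjoint f := by
  induction m with
  | zero => exact ⟨∅, rfl, by simp⟩
  | succ m ih =>
    classical
    obtain ⟨K, hKm, hK⟩ := ih
    have hmeet : (⋃ p ∈ K, ⋃ a ∈ f p, {i | a ∈ f i}).Finite :=
      K.finite_toSet.biUnion fun p _ => (f p).finite_toSet.biUnion fun a _ => hf a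
    obtain ⟨i, -, hi⟩ := Set.infinite_univ.exists_notMem_finite (K.finite_toSet.union hmeet)
    simp only [Set.mem_union, mem_coe, Set.mem_iUnion, Set.mem_ofPred_eq, not_or, not_exists] at hi
    refine ⟨insert i K, by rw [card_insert_of_notMem hi.1, hKm], ?_⟩
    rw [coe_insert]
    refine hK.insert fun p hp _ => Finset.disjoint_left.2 fun a hai hap => hi.2 p hp a hap hai

theorem exists_card_eq_le_sum_of_infinite {ι : Type*} {f : ι → ℤ} (hf : {p | 0 < f p}.Infinite)
    (n : ℕ) : ∃ K : Finset ι, K.card = n ∧ (n : ℤ) ≤ ∑ p ∈ K, f p := by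
  obtain ⟨K, hKf, hKn⟩ := hf.exists_subset_card_eq n
  refine ⟨K, hKn, ?_⟩
  simpa [hKn] using K.card_nsmul_le_sum f 1 fun p hp => hKf hp

/-- Otherwise three of the `v p` would have entries of the same sign at `a`. -/
theorem finite_setOf_apply_ne_zero {ι α : Type*} {v : ι → α →₀ ℤ}
    (hv : ∀ K : Finset ι, K.card = 3 → ∀ a, |(∑ p ∈ K, v p) a| ≤ 2) (a : α) :
    {p | v p a ≠ 0}.Finite := by
  have hv3 (K : Finset ι) (hK : K.card = 3) : |∑ p ∈ K, v p a| ≤ 2 := by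
    simpa only [finsetSum_apply] using hv K hK a
  refine Set.not_infinite.1 fun hinf => ?_
  have hsplit : {p | v p a ≠ 0} = {p | 0 < v p a} ∪ {p | 0 < -v p a} := by
    ext p
    simp only [Set.mem_union, Set.mem_ofPred_eq]
    omega
  rw [hsplit, Set.infinite_union] at hinf
  rcases hinf with hpos | hneg
  · obtain ⟨K, hK, hsum⟩ := exists_card_eq_le_sum_of_infinite hpos 3
    rw [Nat.cast_ofNat] at hsum
    linarith [(abs_le.1 (hv3 K hK)).2]
  · obtain ⟨K, hK, hsum⟩ := exists_card_eq_le_sum_of_infinite hneg 3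
    rw [Nat.cast_ofNat, sum_neg_distrib] at hsum
    linarith [(abs_le.1 (hv3 K hK)).1]

theorem exists_card_eq_le_card_support_sum {ι α : Type*} [Infinite ι] {v : ι → α →₀ ℤ}
    (hv0 : ∀ p, v p ≠ 0) (hv : ∀ a, {p | v p a ≠ 0}.Finite) (m : ℕ) :
    ∃ K : Finset ι, K.card = m ∧ m ≤ (∑ p ∈ K, v p).support.card := by
  classical
  obtain ⟨K, hKm, hK⟩ := exists_card_eq_pairwiseDisjoint (f := fun p => (v p).support)
    (by simpa only [mem_support_iff] using hv) m
  refine ⟨K, hKm, ?_⟩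
  rw [support_sum_eq_biUnion_of_pairwiseDisjoint hK, card_biUnion hK, ← hKm]
  have hpos : ∀ p ∈ K, 1 ≤ (v p).support.card := fun p _ =>
    card_pos.2 (support_nonempty_iff.2 (hv0 p))
  simpa using K.card_nsmul_le_sum _ 1 hpos

/-- The integer `∑ c n * B ^ n`; the digits `c n` may be negative or exceed `B`. -/
noncomputable def digitValue (B : ℤ) : (ℕ →₀ ℤ) →ₗ[ℤ] ℤ :=
  linearCombination ℤ (B ^ ·)

theorem digitValue_apply (B : ℤ) (c : ℕ →₀ ℤ) :
    digitValue B c = ∑ n ∈ c.support, c n * B ^ n := by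
  simp [digitValue, linearCombination_apply, Finsupp.sum]

theorem eq_zero_of_digitValue_eq_zero {B : ℤ} {c : ℕ →₀ ℤ} (hc : ∀ n, |c n| < B)
    (h : digitValue B c = 0) : c = 0 := by
  by_contra hne
  have hB : B ≠ 0 := ((abs_nonneg _).trans_lt (hc 0)).ne'
  set m := c.support.min' (support_nonempty_iff.2 hne)
  have hm : m ∈ c.support := min'_mem _ _
  -- all other digits sit at higher positions, so `B ^ (m + 1)` divides `c m * B ^ m`
  have hhigher : B ^ (m + 1) ∣ ∑ n ∈ c.support.erase m, c n * B ^ n :=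
    dvd_sum fun n hn => dvd_mul_of_dvd_right (pow_dvd_pow B (min'_lt_of_mem_erase_min' _ _ hn)) _
  rw [digitValue_apply, ← Finset.add_sum_erase _ _ hm] at h
  have hlow : B ^ m * B ∣ B ^ m * c m := by
    rw [← pow_succ, mul_comm, eq_neg_of_add_eq_zero_left h]
    exact dvd_neg.2 hhigher
  exact mem_support_iff.1 hm <|
    Int.eq_zero_of_abs_lt_dvd ((mul_dvd_mul_iff_left (pow_ne_zero m hB)).1 hlow) (hc m)

theorem eq_of_digitValue_eq {B : ℤ} {c d : ℕ →₀ ℤ} (hcd : ∀ n, |c n| + |d n| < B)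
    (h : digitValue B c = digitValue B d) : c = d :=
  sub_eq_zero.1 <| eq_zero_of_digitValue_eq_zero (fun n => (abs_sub _ _).trans_lt (hcd n))
    (by rw [map_sub, h, sub_self])

/-- `c` is the digit vector `e_i - e_j - (e_k - e_l)` of the element `(B^i - B^j) - (B^k - B^l)`
of `Δ - Δ` for `b n = B ^ n`. -/
def IsDiffOfDiffs {α : Type*} (c : α →₀ ℤ) : Prop :=
  ∃ i j k l, c = (single i 1 - single j 1) - (single k 1 - single l 1)

namespace IsDiffOfDiffs

variable {α : Type*} {c : α →₀ ℤ}

theorem abs_apply_le_two (hc : IsDiffOfDiffs c) (a : α) : |c a| ≤ 2 := by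
  classical
  obtain ⟨i, j, k, l, rfl⟩ := hc
  simp only [Finsupp.coe_sub, Pi.sub_apply, single_apply]
  split_ifs <;> norm_num

theorem card_support_le_four (hc : IsDiffOfDiffs c) : c.support.card ≤ 4 := by
  classical
  obtain ⟨i, j, k, l, rfl⟩ := hc
  refine (card_le_card (t := {i, j, k, l}) fun a ha => ?_).trans card_le_four
  by_contra hijkl
  simp only [mem_insert, mem_singleton, not_or] at hijkl
  simp [Ne.symm hijkl.1, Ne.symm hijkl.2.1, Ne.symm hijkl.2.2.1,
    Ne.symm hijkl.2.2.2] at ha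

end IsDiffOfDiffs

theorem exists_isDiffOfDiffs_of_mem_deltaSubDelta {B : ℕ} {x : ℤ}
    (hx : x ∈ deltaSubDelta (B ^ ·)) : ∃ c, IsDiffOfDiffs c ∧ digitValue B c = x := by
  obtain ⟨_, ⟨i, j, -, rfl⟩, _, ⟨k, l, -, rfl⟩, rfl⟩ := hx
  refine ⟨_, ⟨i, j, k, l, rfl⟩, ?_⟩
  simp [digitValue, linearCombination_single]

/-- The digits of five such vectors and of one more add up to at most `5 * 2 + 2 < 13` in
absolute value, so base-`B` values determine them. -/
theorem isDiffOfDiffs_sum_of_digitValue_eq {ι : Type*} {B : ℤ} (hB : 13 ≤ B) {K : Finset ι}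
    (hK : K.card ≤ 5) {v : ι → ℕ →₀ ℤ} (hv : ∀ p ∈ K, IsDiffOfDiffs (v p)) {c : ℕ →₀ ℤ}
    (hc : IsDiffOfDiffs c) (h : digitValue B c = ∑ p ∈ K, digitValue B (v p)) :
    IsDiffOfDiffs (∑ p ∈ K, v p) := by
  have hsum : ∀ n, |(∑ p ∈ K, v p) n| ≤ 10 := fun n =>
    calc |(∑ p ∈ K, v p) n| ≤ ∑ p ∈ K, |v p n| := by
          rw [finsetSum_apply]; exact abs_sum_le_sum_abs _ _
      _ ≤ K.card • 2 := K.sum_le_card_nsmul _ _ fun p hp => (hv p hp).abs_apply_le_two n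
      _ ≤ 10 := by rw [nsmul_eq_mul]; norm_cast; omega
  rwa [eq_of_digitValue_eq (fun n => by linarith [hsum n, hc.abs_apply_le_two n])
    ((map_sum _ _ _).trans h.symm)]

theorem four_mul_sum_range_pow_lt {B : ℕ} (hB : 5 ≤ B) (n : ℕ) :
    4 * ∑ i ∈ range n, B ^ i < B ^ n := by
  induction n with
  | zero => simp
  | succ n ih =>
    rw [sum_range_succ, mul_add, pow_succ]
    nlinarith [Nat.mul_le_mul_left (B ^ n) hB]

theorem exists_deltaSubDelta_no_IP :
    ∃ b : ℕ → ℕ,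
      (∀ n : ℕ, (4 : ℕ) * ∑ i ∈ Finset.range n, b i < b n) ∧
      ¬ ∃ a : ℕ → ℤ, (∀ n, a n ≠ 0) ∧
          ∀ K : Finset ℕ, K.Nonempty → (∑ i ∈ K, a i) ∈ deltaSubDelta b := by
  refine ⟨(13 ^ ·), four_mul_sum_range_pow_lt (by norm_num), ?_⟩
  rintro ⟨a, ha0, haΔ⟩
  have hdigits (K : Finset ℕ) (hK : K.Nonempty) :
      ∃ c, IsDiffOfDiffs c ∧ digitValue 13 c = ∑ i ∈ K, a i :=
    exists_isDiffOfDiffs_of_mem_deltaSubDelta (haΔ K hK)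
  choose v hv hva using fun p => by simpa using hdigits {p} (singleton_nonempty p)
  have hsums (K : Finset ℕ) (hK : K.Nonempty) (hK5 : K.card ≤ 5) :
      IsDiffOfDiffs (∑ p ∈ K, v p) := by
    obtain ⟨c, hc, hca⟩ := hdigits K hK
    exact isDiffOfDiffs_sum_of_digitValue_eq (B := 13) le_rfl hK5 (fun p _ => hv p) hc
      (by simp only [hca, hva])
  have hv0 (p : ℕ) : v p ≠ 0 := fun h => ha0 p (by rw [← hva p, h, map_zero])
  have hfinite := finite_setOf_apply_ne_zero fun K hK3 =>
    (hsums K (card_pos.1 (by omega)) (by omega)).abs_apply_le_two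
  obtain ⟨K, hK5, hsupp⟩ := exists_card_eq_le_card_support_sum hv0 hfinite 5
  have := (hsums K (card_pos.1 (by omega)) hK5.le).card_support_le_four
  omega
end

section
/- A topological dynamical system (X, T) is F-mixing if and only if for any two nonempty open sets U, V we have N(U, V) ∩ N(U, U) ∈ F, provided F is a filter. -/
/-- The return time set `N(U, V) = {n ∈ ℤ : Tⁿ(U) ∩ V ≠ ∅}` for a
homeomorphism given as a bi-continuous bijection `T`. -/
def retTimes {X : Type*} (T : Equiv.Perm X) (U V : Set X) : Set ℤ :=
  {n : ℤ | ∃ x ∈ U, (T ^ n) x ∈ V}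

/-- `(X, T)` is `F`-mixing: the product system `(X × X, T × T)` is `F`-transitive. -/
def FMixing {X : Type*} [TopologicalSpace X] (T : Equiv.Perm X) (F : Set (Set ℤ)) : Prop :=
  ∀ W₁ W₂ : Set (X × X), IsOpen W₁ → IsOpen W₂ → W₁.Nonempty → W₂.Nonempty →
    {n : ℤ | ∃ p ∈ W₁, (((T ^ n) p.1, (T ^ n) p.2) : X × X) ∈ W₂} ∈ F

private lemma contPowAux {X : Type*} [TopologicalSpace X] (S : Equiv.Perm X)
    (hS : Continuous S) : ∀ m : ℕ, Continuous ⇑(S ^ m)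
  | 0 => by rw [pow_zero, Equiv.Perm.coe_one]; exact continuous_id
  | (m + 1) => by
      rw [pow_succ, Equiv.Perm.coe_mul]
      exact (contPowAux S hS m).comp hS

private lemma contZpowAux {X : Type*} [TopologicalSpace X] (T : Equiv.Perm X)
    (hT : Continuous T) (hT' : Continuous T.symm) (n : ℤ) : Continuous ⇑(T ^ n) := by
  cases n with
  | ofNat m => rw [Int.ofNat_eq_coe, zpow_natCast]; exact contPowAux T hT m
  | negSucc m =>
      rw [zpow_negSucc, ← inv_pow]
      refine contPowAux T⁻¹ ?_ (m + 1)
      have h : ⇑(T⁻¹) = ⇑T.symm := rfl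
      rw [h]; exact hT'

private lemma zappAux {X : Type*} (T : Equiv.Perm X) (a b : ℤ) (x : X) :
    (T ^ a) ((T ^ b) x) = (T ^ (a + b)) x := by
  rw [zpow_add, Equiv.Perm.mul_apply]

theorem fMixing_iff (X : Type*) [MetricSpace X] [CompactSpace X]
    (T : Equiv.Perm X) (hT : Continuous T) (hT' : Continuous T.symm)
    (F : Set (Set ℤ))
    (hne : F.Nonempty)
    (hher : ∀ A ∈ F, ∀ B : Set ℤ, A ⊆ B → B ∈ F)
    (hint : ∀ A ∈ F, ∀ B ∈ F, A ∩ B ∈ F) :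
    FMixing T F ↔
      ∀ U V : Set X, IsOpen U → IsOpen V → U.Nonempty → V.Nonempty →
        retTimes T U V ∩ retTimes T U U ∈ F := by
  constructor
  · intro hmix U V hU hV hUne hVne
    have h := hmix (U ×ˢ U) (V ×ˢ U) (hU.prod hU) (hV.prod hU)
      (hUne.prod hUne) (hVne.prod hUne)
    refine hher _ h _ ?_
    rintro n ⟨p, hp, hp2⟩
    exact ⟨⟨p.1, hp.1, hp2.1⟩, ⟨p.2, hp.2, hp2.2⟩⟩
  · intro hcond
    by_cases hemp : ∅ ∈ F
    · intro W₁ W₂ _ _ _ _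
      exact hher _ hemp _ (Set.empty_subset _)
    have hFne : ∀ A ∈ F, A.Nonempty := by
      intro A hA
      rcases Set.eq_empty_or_nonempty A with rfl | h
      · exact absurd hA hemp
      · exact h
    have htrans : ∀ U V : Set X, IsOpen U → IsOpen V → U.Nonempty → V.Nonempty →
        ∃ p : ℤ, ∃ x ∈ U, (T ^ p) x ∈ V := by
      intro U V hU hV hUne hVne
      obtain ⟨n, hn⟩ := hFne _ (hcond U V hU hV hUne hVne)
      exact ⟨n, hn.1⟩
    -- Key claim: any two return-time conditions can be realized simultaneously.
    have hclaim : ∀ A B C D : Set X, IsOpen A → IsOpen B → IsOpen C → IsOpen D →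
        A.Nonempty → B.Nonempty → C.Nonempty → D.Nonempty →
        ∃ n : ℤ, (∃ x ∈ A, (T ^ n) x ∈ B) ∧ (∃ y ∈ C, (T ^ n) y ∈ D) := by
      intro A B C D hA hB hC hD hAne hBne hCne hDne
      obtain ⟨p, x₀, hx₀A, hx₀C⟩ := htrans A C hA hC hAne hCne
      set E : Set X := C ∩ (⇑(T ^ (-p)) ⁻¹' A) with hEdef
      have hEo : IsOpen E := hC.inter (hA.preimage (contZpowAux T hT hT' (-p)))
      have hEne : E.Nonempty := by
        refine ⟨(T ^ p) x₀, hx₀C, ?_⟩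
        show (T ^ (-p)) ((T ^ p) x₀) ∈ A
        rw [zappAux]
        simpa using hx₀A
      set B' : Set X := (⇑(T ^ (-p)) ⁻¹' B) with hB'def
      have hB'o : IsOpen B' := hB.preimage (contZpowAux T hT hT' (-p))
      have hB'ne : B'.Nonempty := by
        obtain ⟨b, hb⟩ := hBne
        refine ⟨(T ^ p) b, ?_⟩
        show (T ^ (-p)) ((T ^ p) b) ∈ B
        rw [zappAux]
        simpa using hb
      obtain ⟨t, d₀, hd₀D, hd₀E⟩ := htrans D E hD hEo hDne hEne
      set U' : Set X := E ∩ (⇑(T ^ (-t)) ⁻¹' D) with hU'def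
      have hU'o : IsOpen U' := hEo.inter (hD.preimage (contZpowAux T hT hT' (-t)))
      have hU'ne : U'.Nonempty := by
        refine ⟨(T ^ t) d₀, hd₀E, ?_⟩
        show (T ^ (-t)) ((T ^ t) d₀) ∈ D
        rw [zappAux]
        simpa using hd₀D
      set V' : Set X := (⇑(T ^ (-t)) ⁻¹' B') with hV'def
      have hV'o : IsOpen V' := hB'o.preimage (contZpowAux T hT hT' (-t))
      have hV'ne : V'.Nonempty := by
        obtain ⟨b, hb⟩ := hB'ne
        refine ⟨(T ^ t) b, ?_⟩
        show (T ^ (-t)) ((T ^ t) b) ∈ B'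
        rw [zappAux]
        simpa using hb
      obtain ⟨m, ⟨x, hxU', hxV'⟩, ⟨y, hyU', hyU'2⟩⟩ :=
        hFne _ (hcond U' V' hU'o hV'o hU'ne hV'ne)
      refine ⟨m - t, ⟨(T ^ (-p)) x, hxU'.1.2, ?_⟩, ⟨y, hyU'.1.1, ?_⟩⟩
      · have h1 : (T ^ (-p)) ((T ^ (-t)) ((T ^ m) x)) ∈ B := hxV'
        have e1 : (T ^ (m - t)) ((T ^ (-p)) x) = (T ^ (-p)) ((T ^ (-t)) ((T ^ m) x)) := by
          rw [zappAux, zappAux, zappAux]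
          have : m - t + -p = -p + (-t + m) := by ring
          rw [this, add_assoc]
        rw [e1]; exact h1
      · have h2 : (T ^ (-t)) ((T ^ m) y) ∈ D := hyU'2.2
        have e2 : (T ^ (m - t)) y = (T ^ (-t)) ((T ^ m) y) := by
          rw [zappAux]
          have : m - t = -t + m := by ring
          rw [this]
        rw [e2]; exact h2
    intro W₁ W₂ hW₁ hW₂ hW₁ne hW₂ne
    obtain ⟨⟨a₁, a₂⟩, ha⟩ := hW₁ne
    obtain ⟨⟨b₁, b₂⟩, hb⟩ := hW₂ne
    obtain ⟨U₁, U₂, hU₁, hU₂, ha₁, ha₂, hUsub⟩ := isOpen_prod_iff.mp hW₁ a₁ a₂ ha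
    obtain ⟨V₁, V₂, hV₁, hV₂, hb₁, hb₂, hVsub⟩ := isOpen_prod_iff.mp hW₂ b₁ b₂ hb
    obtain ⟨a, ⟨x₁, hx₁, hx₁'⟩, ⟨y₁, hy₁, hy₁'⟩⟩ :=
      hclaim U₁ U₂ V₁ V₂ hU₁ hU₂ hV₁ hV₂ ⟨a₁, ha₁⟩ ⟨a₂, ha₂⟩ ⟨b₁, hb₁⟩ ⟨b₂, hb₂⟩
    set U : Set X := U₁ ∩ (⇑(T ^ a) ⁻¹' U₂) with hUdef
    set V : Set X := V₁ ∩ (⇑(T ^ a) ⁻¹' V₂) with hVdef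
    have hUo : IsOpen U := hU₁.inter (hU₂.preimage (contZpowAux T hT hT' a))
    have hVo : IsOpen V := hV₁.inter (hV₂.preimage (contZpowAux T hT hT' a))
    refine hher _ (hcond U V hUo hVo ⟨x₁, hx₁, hx₁'⟩ ⟨y₁, hy₁, hy₁'⟩) _ ?_
    rintro n ⟨⟨x, hxU, hxV⟩, -⟩
    refine ⟨(x, (T ^ a) x), hUsub ⟨hxU.1, hxU.2⟩, hVsub ⟨hxV.1, ?_⟩⟩
    show (T ^ n) ((T ^ a) x) ∈ V₂
    have e : (T ^ n) ((T ^ a) x) = (T ^ a) ((T ^ n) x) := by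
      rw [zappAux, zappAux, add_comm]
    rw [e]; exact hxV.2
end

section
/- The set of perfect squares E = {n² : n ∈ ℕ} is not a Δ-set: there is no infinite increasing sequence S of natural numbers whose difference set Δ(S) = {s_i − s_j : i > j} is contained in E. -/
theorem squares_not_delta_set :
    ¬ ∃ s : ℕ → ℕ, StrictMono s ∧
        ∀ i j : ℕ, j < i → ∃ m : ℕ, s i - s j = m ^ 2 := by
  rintro ⟨s, hs, h⟩
  set d := s 1 - s 0 with hd
  have h01 : s 0 < s 1 := hs one_pos
  set n := s 1 + d ^ 2 + 1 with hn
  have h1n : 1 < n := by omega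
  have hsn : n ≤ s n := hs.le_apply
  have h1 : s 1 < s n := hs h1n
  obtain ⟨a, ha⟩ := h n 0 (by omega)
  obtain ⟨b, hb⟩ := h n 1 h1n
  have hab : a ^ 2 = b ^ 2 + d := by omega
  have hbd : d ^ 2 < b ^ 2 := by omega
  have hdb : d < b := by
    by_contra hc
    push_neg at hc
    exact absurd (Nat.pow_le_pow_left hc 2) (by omega)
  have hba : b < a := by
    by_contra hc
    push_neg at hc
    exact absurd (Nat.pow_le_pow_left hc 2) (by omega)
  have : a ^ 2 < (b + 1) ^ 2 := by nlinarith
  have : (b + 1) ^ 2 ≤ a ^ 2 := Nat.pow_le_pow_left (by omega) 2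
  omega
end
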